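/- arXiv:cs/0607009 — 2 statements merged into one kernel-verified Lean document; each statement's English description precedes it below -/
import Mathlib

section
/- With a_0 = 1, a_{n+1} = a_n ā_n ā_n a_n a_n, c_n = a_n a_n a_n a_n, and ω = c_0 c_1 c_2 ⋯: for every n > 0, the string c_n does not occur in the suffix ω[5^{n+1}−1, ∞). -/
/-- The factor of `ω` starting at `i` of length `n`. -/
def seg {α : Type*} (ω : ℕ → α) (i n : ℕ) : List α :=
  (List.range n).map (fun k => ω (i + k))

/-- `x` occurs in `ω` at position `i`. -/
def OccursAt {α : Type*} (ω : ℕ → α) (x : List α) (i : ℕ) : Prop :=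
  seg ω i x.length = x

/-- Strongly almost periodic: every factor occurs in every sufficiently long factor. -/
def SAP {α : Type*} (ω : ℕ → α) : Prop :=
  ∀ x : List α, (∃ i, OccursAt ω x i) →
    ∃ l, ∀ j, ∃ i, j ≤ i ∧ i + x.length ≤ j + l ∧ OccursAt ω x i

/-- Almost periodic: every factor occurring infinitely often occurs in every
sufficiently long factor. -/
def AP {α : Type*} (ω : ℕ → α) : Prop :=
  ∀ x : List α, {i | OccursAt ω x i}.Infinite →
    ∃ l, ∀ j, ∃ i, j ≤ i ∧ i + x.length ≤ j + l ∧ OccursAt ω x i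

/-- Eventually strongly almost periodic: some suffix is strongly almost periodic. -/
def EAP {α : Type*} (ω : ℕ → α) : Prop :=
  ∃ n, SAP (fun i => ω (n + i))

/-- `a_0 = 1`, `a_{n+1} = a_n ā_n ā_n a_n a_n`. -/
def aStr : ℕ → List Bool
  | 0 => [true]
  | n + 1 => aStr n ++ (aStr n).map (fun b => !b) ++ (aStr n).map (fun b => !b)
      ++ aStr n ++ aStr n

/-- `c_n = a_n a_n a_n a_n`. -/
def cStr (n : ℕ) : List Bool := aStr n ++ aStr n ++ aStr n ++ aStr n

/-- The prefix `c_0 c_1 ⋯ c_{n-1}` of the sequence `ω`. -/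
def prefW (n : ℕ) : List Bool := ((List.range n).map cStr).flatten

/-- The sequence `ω = c_0 c_1 c_2 ⋯` (note `|prefW (i+1)| = 5^{i+1} - 1 > i`). -/
def omegaAP (i : ℕ) : Bool := (prefW (i + 1)).getD i false

/-! Let `φ` be the substitution `1 ↦ 10011`, `0 ↦ 01100`. Then `a_n = φⁿ(1)` and
`c_{n+k} = φⁿ(c_k)`, so `ω[5ⁿ - 1, ∞) = φⁿ(ω)`. Hence the suffix in question is `φⁿ(φ(ω))`,
while `c_n = φⁿ(1111)`. The substitution is recognizable: an occurrence of `φ(x)` in `φ(δ)` sees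
its first block inside two consecutive blocks of `φ(δ)`, which forces it to start at a multiple
of `5`; iterating, an occurrence of `φⁿ(x)` in `φⁿ(δ)` comes from an occurrence of `x` in `δ`.
So `1111` would occur in `φ(ω)`, but no two consecutive blocks of `φ` contain `1111`. -/

section Segments

variable {α : Type*}

@[simp] lemma length_seg (ω : ℕ → α) (i n : ℕ) : (seg ω i n).length = n := by
  simp [seg]

@[simp] lemma getElem_seg (ω : ℕ → α) (i n j : ℕ) (hj : j < (seg ω i n).length) :
    (seg ω i n)[j] = ω (i + j) := by
  simp [seg]

lemma seg_add (ω : ℕ → α) (i m k : ℕ) : seg ω i (m + k) = seg ω i m ++ seg ω (i + m) k := by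
  simp [seg, List.range_add, Nat.add_assoc]

lemma take_drop_seg (ω : ℕ → α) {i r k L : ℕ} (h : r + k ≤ L) :
    ((seg ω i L).drop r).take k = seg ω (i + r) k := by
  apply List.ext_getElem
  · simp only [List.length_take, List.length_drop, length_seg]
    omega
  · intro j _ _
    simp [Nat.add_assoc]

lemma apply_eq_of_seg_eq {ω ω' : ℕ → α} {i i' L j : ℕ} (h : seg ω i L = seg ω' i' L)
    (hj : j < L) : ω (i + j) = ω' (i' + j) := by
  simpa [seg] using List.getElem_of_eq h (by simpa using hj)

lemma OccursAt.of_append {ω : ℕ → α} {x y : List α} {i : ℕ} (h : OccursAt ω (x ++ y) i) :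
    OccursAt ω x i := by
  unfold OccursAt at h ⊢
  rw [← Nat.add_zero i, ← take_drop_seg ω (L := (x ++ y).length) (by simp), h]
  simp

end Segments

section Expansion

-- `block n b = φⁿ(b)`; `expand n` and `expandSeq n` apply `φⁿ` to words and to sequences.
def block (n : ℕ) (b : Bool) : List Bool := if b then aStr n else (aStr n).map (fun b => !b)

def expand (n : ℕ) (w : List Bool) : List Bool := w.flatMap (block n)

def expandSeq (n : ℕ) (δ : ℕ → Bool) (m : ℕ) : Bool :=
  (block n (δ (m / 5 ^ n))).getD (m % 5 ^ n) false

@[simp] lemma length_aStr (n : ℕ) : (aStr n).length = 5 ^ n := by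
  induction n with
  | zero => rfl
  | succ n ih =>
    simp only [aStr, List.length_append, List.length_map, ih]
    ring

@[simp] lemma length_block (n : ℕ) (b : Bool) : (block n b).length = 5 ^ n := by
  cases b <;> simp [block]

@[simp] lemma expand_nil (n : ℕ) : expand n [] = [] := rfl

@[simp] lemma expand_cons (n : ℕ) (b : Bool) (w : List Bool) :
    expand n (b :: w) = block n b ++ expand n w := rfl

@[simp] lemma expand_append (n : ℕ) (w v : List Bool) :
    expand n (w ++ v) = expand n w ++ expand n v := List.flatMap_append

@[simp] lemma length_expand (n : ℕ) (w : List Bool) : (expand n w).length = 5 ^ n * w.length := by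
  induction w with
  | nil => simp
  | cons b w ih =>
    simp only [expand_cons, List.length_append, length_block, ih, List.length_cons]
    ring

lemma expand_map_not (n : ℕ) (w : List Bool) :
    expand n (w.map (fun b => !b)) = (expand n w).map (fun b => !b) := by
  induction w with
  | nil => rfl
  | cons b w ih => cases b <;> simp [ih, block, Function.comp_def]

lemma aStr_add (n k : ℕ) : aStr (n + k) = expand n (aStr k) := by
  induction k with
  | zero => simp [aStr, block]
  | succ k ih => rw [← Nat.add_assoc, aStr, aStr, ih]; simp [expand_map_not]

lemma block_add (n k : ℕ) (b : Bool) : block (n + k) b = expand n (block k b) := by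
  cases b <;> simp [block, aStr_add, expand_map_not]

lemma expand_add (n k : ℕ) (w : List Bool) : expand (n + k) w = expand n (expand k w) := by
  simp only [expand, List.flatMap_assoc]
  congr 1
  funext b
  exact block_add n k b

@[simp] lemma expand_zero (w : List Bool) : expand 0 w = w := by
  induction w with
  | nil => rfl
  | cons b w ih => cases b <;> simp [ih, block, aStr]

lemma cStr_eq_expand (n : ℕ) : cStr n = expand n [true, true, true, true] := by
  simp [cStr, block]

lemma head?_aStr (n : ℕ) : (aStr n).head? = some true := by
  induction n with
  | zero => rfl
  | succ n ih => simp [aStr, List.head?_append, ih]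

lemma block_injective (n : ℕ) : Function.Injective (block n) := by
  have head_block : ∀ b, (block n b).head? = some b := by
    intro b; cases b <;> simp [block, head?_aStr]
  intro a b h
  simpa [head_block] using congrArg List.head? h

lemma expand_injective (n : ℕ) : Function.Injective (expand n) := by
  intro w
  induction w with
  | nil => intro v h; cases v <;> simp_all [← List.length_eq_zero_iff]
  | cons a w ih =>
    intro v h
    cases v with
    | nil => simp [← List.length_eq_zero_iff] at h
    | cons b v =>
      obtain ⟨hab, hwv⟩ := List.append_inj h (by simp)
      rw [block_injective n hab, ih hwv]

end Expansion

section Recognizability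

@[simp] lemma expandSeq_zero (δ : ℕ → Bool) : expandSeq 0 δ = δ := by
  funext m
  cases h : δ m <;> simp [expandSeq, block, aStr, h, Nat.mod_one]

lemma seg_expandSeq_block (n : ℕ) (δ : ℕ → Bool) (s : ℕ) :
    seg (expandSeq n δ) (5 ^ n * s) (5 ^ n) = block n (δ s) := by
  have hpos : 0 < 5 ^ n := by positivity
  apply List.ext_getElem (by simp)
  intro j hj _
  have hj' : j < 5 ^ n := by simpa using hj
  rw [getElem_seg, expandSeq, Nat.mul_add_div hpos, Nat.mul_add_mod, Nat.div_eq_of_lt hj',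
    Nat.mod_eq_of_lt hj', Nat.add_zero, List.getD_eq_getElem]

lemma seg_expandSeq (n : ℕ) (δ : ℕ → Bool) (s L : ℕ) :
    seg (expandSeq n δ) (5 ^ n * s) (5 ^ n * L) = expand n (seg δ s L) := by
  induction L with
  | zero => rfl
  | succ L ih =>
    rw [Nat.mul_succ, seg_add, ih, ← Nat.mul_add, seg_expandSeq_block, seg_add, expand_append]
    simp [seg]

lemma expandSeq_add (n k : ℕ) (δ : ℕ → Bool) :
    expandSeq (n + k) δ = expandSeq n (expandSeq k δ) := by
  funext m
  have hseg : ∀ L, seg (expandSeq (n + k) δ) 0 (5 ^ (n + k) * L)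
      = seg (expandSeq n (expandSeq k δ)) 0 (5 ^ (n + k) * L) := by
    intro L
    have hL : 5 ^ (n + k) * L = 5 ^ n * (5 ^ k * L) := by ring
    have h0 := seg_expandSeq (n + k) δ 0 L
    have h1 := seg_expandSeq n (expandSeq k δ) 0 (5 ^ k * L)
    have h2 := seg_expandSeq k δ 0 L
    simp only [Nat.mul_zero] at h0 h1 h2
    rw [h0, hL, h1, h2, expand_add]
  have hm : m < 5 ^ (n + k) * (m + 1) :=
    Nat.lt_of_lt_of_le m.lt_succ_self (Nat.le_mul_of_pos_left _ (by positivity))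
  simpa using apply_eq_of_seg_eq (hseg (m + 1)) hm

lemma occursAt_expandSeq_expand_iff {n : ℕ} {δ : ℕ → Bool} {x : List Bool} {s : ℕ} :
    OccursAt (expandSeq n δ) (expand n x) (5 ^ n * s) ↔ OccursAt δ x s := by
  rw [OccursAt, OccursAt, length_expand, seg_expandSeq, (expand_injective n).eq_iff]

lemma OccursAt.eq_take_drop_blocks {n : ℕ} {δ : ℕ → Bool} {x : List Bool} {i : ℕ}
    (h : OccursAt (expandSeq n δ) x i) (hx : i % 5 ^ n + x.length ≤ 2 * 5 ^ n) :
    ((block n (δ (i / 5 ^ n)) ++ block n (δ (i / 5 ^ n + 1))).drop (i % 5 ^ n)).take x.length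
      = x := by
  have hblocks : block n (δ (i / 5 ^ n)) ++ block n (δ (i / 5 ^ n + 1))
      = seg (expandSeq n δ) (5 ^ n * (i / 5 ^ n)) (5 ^ n * 2) := by
    rw [seg_expandSeq]; simp [seg, List.range_succ]
  rw [hblocks, take_drop_seg _ (by omega), Nat.div_add_mod]
  exact h

lemma window_block_one_eq_block_one :
    ∀ a b c : Bool, ∀ r < 5, ((block 1 b ++ block 1 c).drop r).take 5 = block 1 a → r = 0 := by
  decide

lemma window_block_one_ne_four_trues :
    ∀ b c : Bool, ∀ r < 5, ((block 1 b ++ block 1 c).drop r).take 4 ≠ [true, true, true, true] := by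
  decide

lemma exists_eq_of_occursAt_expandSeq_one {δ : ℕ → Bool} {x : List Bool} {i : ℕ} (hx : x ≠ [])
    (h : OccursAt (expandSeq 1 δ) (expand 1 x) i) : ∃ s, i = 5 * s ∧ OccursAt δ x s := by
  obtain ⟨a, x', rfl⟩ := List.exists_cons_of_ne_nil hx
  have hfirst : OccursAt (expandSeq 1 δ) (block 1 a) i := OccursAt.of_append h
  have hwindow := hfirst.eq_take_drop_blocks (by simp only [pow_one, length_block]; omega)
  simp only [length_block, pow_one] at hwindow
  have hr : i % 5 = 0 :=
    window_block_one_eq_block_one _ _ _ _ (Nat.mod_lt _ (by norm_num)) hwindow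
  refine ⟨i / 5, by omega, ?_⟩
  rw [← occursAt_expandSeq_expand_iff (n := 1), pow_one]
  convert h using 1
  omega

theorem exists_eq_of_occursAt_expandSeq {n : ℕ} {δ : ℕ → Bool} {x : List Bool} {i : ℕ}
    (hx : x ≠ []) (h : OccursAt (expandSeq n δ) (expand n x) i) :
    ∃ s, i = 5 ^ n * s ∧ OccursAt δ x s := by
  induction n generalizing δ x i with
  | zero => exact ⟨i, by simp, by rwa [expandSeq_zero, expand_zero] at h⟩
  | succ n ih =>
    rw [expandSeq_add, expand_add] at h
    obtain ⟨s', rfl, hs'⟩ := ih (by simpa [← List.length_pos_iff] using hx) h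
    obtain ⟨s, rfl, hs⟩ := exists_eq_of_occursAt_expandSeq_one hx hs'
    exact ⟨s, by ring, hs⟩

lemma not_occursAt_expandSeq_one_four_trues (δ : ℕ → Bool) (i : ℕ) :
    ¬ OccursAt (expandSeq 1 δ) [true, true, true, true] i := by
  intro h
  have hwindow := h.eq_take_drop_blocks
    (by simp only [pow_one, List.length_cons, List.length_nil]; omega)
  simp only [pow_one, List.length_cons, List.length_nil] at hwindow
  exact window_block_one_ne_four_trues _ _ _ (Nat.mod_lt _ (by norm_num)) hwindow

end Recognizability

section Omega

lemma prefW_succ (M : ℕ) : prefW (M + 1) = prefW M ++ cStr M := by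
  simp [prefW, List.range_succ]

@[simp] lemma length_prefW (M : ℕ) : (prefW M).length = 5 ^ M - 1 := by
  induction M with
  | zero => rfl
  | succ M ih =>
    have : 1 ≤ 5 ^ M := Nat.one_le_pow _ _ (by norm_num)
    rw [prefW_succ, List.length_append, ih, cStr_eq_expand, length_expand, pow_succ]
    simp only [List.length_cons, List.length_nil]
    omega

lemma prefW_add (n k : ℕ) : prefW (n + k) = prefW n ++ expand n (prefW k) := by
  induction k with
  | zero => simp [prefW]
  | succ k ih =>
    rw [← Nat.add_assoc, prefW_succ, prefW_succ, ih, cStr_eq_expand, cStr_eq_expand, expand_add,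
      expand_append, List.append_assoc]

lemma prefW_isPrefix_of_le {M M' : ℕ} (h : M ≤ M') : prefW M <+: prefW M' :=
  ⟨_, (Nat.add_sub_cancel' h ▸ prefW_add M (M' - M)).symm⟩

lemma seg_omegaAP_prefW (M : ℕ) : seg omegaAP 0 (prefW M).length = prefW M := by
  apply List.ext_getElem (by simp)
  intro i _ hi
  have hi' : i < (prefW (i + 1)).length := by
    have := Nat.lt_pow_self (n := i + 1) (a := 5) (by norm_num)
    rw [length_prefW]; omega
  rw [getElem_seg, Nat.zero_add, omegaAP, List.getD_eq_getElem _ _ hi',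
    (prefW_isPrefix_of_le (le_max_left _ M)).getElem hi',
    (prefW_isPrefix_of_le (le_max_right (i + 1) M)).getElem hi]

lemma omegaAP_five_pow_sub_one_add (n m : ℕ) :
    omegaAP (5 ^ n - 1 + m) = expandSeq n omegaAP m := by
  set L := (prefW (m + 1)).length with hL
  have hseg : seg omegaAP (5 ^ n - 1) (5 ^ n * L) = seg (expandSeq n omegaAP) 0 (5 ^ n * L) := by
    have h := seg_omegaAP_prefW (n + (m + 1))
    rw [prefW_add, List.length_append, length_expand, seg_add] at h
    have h' := (List.append_inj h (by simp)).2
    rw [Nat.zero_add, length_prefW] at h'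
    have := seg_expandSeq n omegaAP 0 L
    rw [Nat.mul_zero, seg_omegaAP_prefW] at this
    rw [h', this]
  have hm : m < 5 ^ n * L := by
    have h1 := Nat.lt_pow_self (n := m + 1) (a := 5) (by norm_num)
    have h2 : L ≤ 5 ^ n * L := Nat.le_mul_of_pos_left _ (by positivity)
    rw [hL, length_prefW] at h2 ⊢
    omega
  simpa using apply_eq_of_seg_eq hseg hm

end Omega

theorem cStr_not_in_suffix_general (n : ℕ) :
    ¬ ∃ i, OccursAt (fun k => omegaAP (5 ^ (n + 1) - 1 + k)) (cStr n) i := by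
  rintro ⟨i, hi⟩
  have hsuffix : (fun k => omegaAP (5 ^ (n + 1) - 1 + k)) = expandSeq n (expandSeq 1 omegaAP) := by
    funext k
    rw [omegaAP_five_pow_sub_one_add, expandSeq_add]
  rw [hsuffix, cStr_eq_expand] at hi
  obtain ⟨s, -, hs⟩ := exists_eq_of_occursAt_expandSeq (by simp) hi
  exact not_occursAt_expandSeq_one_four_trues omegaAP s hs

/-- For every `n > 0`, the string `c_n` does not occur in the suffix
`ω[5^{n+1} - 1, ∞)` of `ω = c_0 c_1 c_2 ⋯`. -/
theorem cStr_not_in_suffix (n : ℕ) (hn : 0 < n) :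
    ¬ ∃ i, OccursAt (fun k => omegaAP (5 ^ (n + 1) - 1 + k)) (cStr n) i :=
  cStr_not_in_suffix_general n
end

section
/- If ω is strongly almost periodic and ν is periodic, then the product sequence ω × ν, defined by (ω × ν)(i) = ⟨ω(i), ν(i)⟩, is strongly almost periodic. -/
lemma seg_length {α : Type*} (ω : ℕ → α) (i n : ℕ) : (seg ω i n).length = n := by
  simp [seg]

lemma seg_eq_seg_iff {α : Type*} (ω : ℕ → α) (q a N : ℕ) :
    seg ω q N = seg ω a N ↔ ∀ k < N, ω (q + k) = ω (a + k) := by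
  simp [seg, List.map_eq_map_iff]

lemma key {Sig : Type*} (ω : ℕ → Sig) (hω : SAP ω)
    (T : ℕ) (hT : 0 < T) (X : List Sig) (i₀ : ℕ) (h : OccursAt ω X i₀) :
    ∃ L, ∀ j, ∃ i, j ≤ i ∧ i + X.length ≤ j + L ∧ OccursAt ω X i ∧ i % T = i₀ % T := by
  haveI : NeZero T := ⟨hT.ne'⟩
  -- the set of residues (relative to i₀) of matches of length N, at positions ≥ i₀
  set SN : ℕ → Set (ZMod T) :=
    fun N => {δ | ∃ q, i₀ ≤ q ∧ (∀ k < N, ω (q + k) = ω (i₀ + k)) ∧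
      ((q - i₀ : ℕ) : ZMod T) = δ} with hSNdef
  have hanti : ∀ {N M : ℕ}, N ≤ M → SN M ⊆ SN N := by
    rintro N M hNM δ ⟨q, hq1, hq2, hq3⟩
    exact ⟨q, hq1, fun k hk => hq2 k (lt_of_lt_of_le hk hNM), hq3⟩
  set S : Set (ZMod T) := ⋂ N, SN N with hSdef
  have hS0 : (0 : ZMod T) ∈ S :=
    Set.mem_iInter.mpr fun N => ⟨i₀, le_refl _, fun k _ => rfl, by simp⟩
  have hadd : ∀ a b : ZMod T, a ∈ S → b ∈ S → a + b ∈ S := by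
    intro a b ha hb
    rw [hSdef, Set.mem_iInter] at ha hb ⊢
    intro N
    obtain ⟨q, hq1, hq2, hq3⟩ := ha N
    obtain ⟨p, hp1, hp2, hp3⟩ := hb (q - i₀ + N)
    refine ⟨p + (q - i₀), le_trans hp1 (Nat.le_add_right _ _), ?_, ?_⟩
    · intro k hk
      have e1 : ω (p + (q - i₀) + k) = ω (i₀ + (q - i₀ + k)) := by
        rw [Nat.add_assoc]
        exact hp2 (q - i₀ + k) (by omega)
      have e2 : i₀ + (q - i₀ + k) = q + k := by omega
      rw [e1, e2]
      exact hq2 k hk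
    · have e : p + (q - i₀) - i₀ = (p - i₀) + (q - i₀) := by omega
      rw [e, Nat.cast_add, hp3, hq3, add_comm]
  -- stabilization
  have h1 : ∀ δ : ZMod T, ∃ N, δ ∈ S ∨ δ ∉ SN N := by
    intro δ
    by_cases hd : δ ∈ S
    · exact ⟨0, Or.inl hd⟩
    · rw [hSdef, Set.mem_iInter] at hd
      push_neg at hd
      obtain ⟨N, hN⟩ := hd
      exact ⟨N, Or.inr hN⟩
  choose f hf using h1
  set Nstar := Finset.univ.sup f with hNstar
  have hstab : ∀ {N}, Nstar ≤ N → SN N ⊆ S := by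
    intro N hN δ hδ
    rcases hf δ with hd | hd
    · exact hd
    · exact absurd (hanti (le_trans (Finset.le_sup (Finset.mem_univ δ)) hN) hδ) hd
  -- inverses: S is closed under nsmul hence has inverses
  have hsmul : ∀ (m : ℕ) (δ : ZMod T), δ ∈ S → m • δ ∈ S := by
    intro m δ hδ
    induction m with
    | zero => simpa using hS0
    | succ m ih => rw [succ_nsmul]; exact hadd _ _ ih hδ
  have hinv : ∀ δ : ZMod T, δ ∈ S → ∃ σ ∈ S, δ + σ = 0 := by
    intro δ hδ
    refine ⟨(T - 1) • δ, hsmul _ _ hδ, ?_⟩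
    have e : δ + (T - 1) • δ = T • δ := by
      nth_rewrite 1 [← one_nsmul δ]
      rw [← add_nsmul]
      congr 1
      omega
    rw [e, nsmul_eq_mul, ZMod.natCast_self, zero_mul]
  -- choose a witness position for each residue in S
  have h2 : ∀ δ : ZMod T, ∃ q, δ ∈ S →
      i₀ ≤ q ∧ (∀ k < X.length, ω (q + k) = ω (i₀ + k)) ∧ ((q - i₀ : ℕ) : ZMod T) = δ := by
    intro δ
    by_cases hd : δ ∈ S
    · obtain ⟨q, hq⟩ := Set.mem_iInter.mp hd X.length
      exact ⟨q, fun _ => hq⟩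
    · exact ⟨0, fun hc => absurd hc hd⟩
  choose g hg using h2
  set F := Finset.univ.sup g with hF
  set N := Nstar + F + X.length + 1 with hNdef
  obtain ⟨L, hL⟩ := hω (seg ω i₀ N)
    ⟨i₀, by show seg ω i₀ (seg ω i₀ N).length = _; rw [seg_length]⟩
  refine ⟨L + i₀, fun j => ?_⟩
  obtain ⟨p, hp1, hp2, hp3⟩ := hL (max j i₀)
  rw [seg_length] at hp2
  have hpi : i₀ ≤ p := le_trans (le_max_right j i₀) hp1
  have hpoint : ∀ k < N, ω (p + k) = ω (i₀ + k) := by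
    have h3 := hp3
    rw [OccursAt, seg_length] at h3
    exact (seg_eq_seg_iff ω p i₀ N).mp h3
  have hδS : ((p - i₀ : ℕ) : ZMod T) ∈ S := hstab (by omega) ⟨p, hpi, hpoint, rfl⟩
  obtain ⟨σ, hσS, hδσ⟩ := hinv _ hδS
  obtain ⟨hq1, hq2, hq3⟩ := hg σ hσS
  have hqF : g σ ≤ F := Finset.le_sup (Finset.mem_univ σ)
  refine ⟨p + (g σ - i₀), le_trans (le_max_left j i₀) (le_trans hp1 (Nat.le_add_right _ _)),
    by omega, ?_, ?_⟩
  · -- occurrence of X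
    rw [OccursAt]
    have e : seg ω (p + (g σ - i₀)) X.length = seg ω i₀ X.length := by
      rw [seg_eq_seg_iff]
      intro k hk
      have e1 : ω (p + (g σ - i₀) + k) = ω (i₀ + (g σ - i₀ + k)) := by
        rw [Nat.add_assoc]
        exact hpoint (g σ - i₀ + k) (by omega)
      have e2 : i₀ + (g σ - i₀ + k) = g σ + k := by omega
      rw [e1, e2]
      exact hq2 k hk
    rw [e]
    exact h
  · -- residue
    have hmod : ((p + (g σ - i₀) : ℕ) : ZMod T) = (i₀ : ZMod T) := by
      have e : (p + (g σ - i₀) : ℕ) = i₀ + ((p - i₀) + (g σ - i₀)) := by omega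
      rw [e, Nat.cast_add, Nat.cast_add, hq3, hδσ, add_zero]
    exact (ZMod.natCast_eq_natCast_iff _ _ _).mp hmod
/-- The product of a strongly almost periodic sequence with a periodic sequence is
strongly almost periodic. -/
theorem sap_prod_periodic {Sig Del : Type*} [Finite Sig] [Finite Del]
    (ω : ℕ → Sig) (ν : ℕ → Del) (hω : SAP ω)
    (T : ℕ) (hT : 0 < T) (hν : ∀ i, ν i = ν (i + T)) :
    SAP (fun i => (ω i, ν i)) := by
  intro x hx
  obtain ⟨i₀, hx⟩ := hx
  -- periodicity in the useful form
  have hper : ∀ a b : ℕ, a % T = b % T → ν a = ν b := by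
    have hmul : ∀ (k m : ℕ), ν (m + k * T) = ν m := by
      intro k
      induction k with
      | zero => simp
      | succ k ih =>
        intro m
        have e : m + (k + 1) * T = (m + k * T) + T := by ring
        rw [e, ← hν (m + k * T)]
        exact ih m
    intro a b hab
    have ha := hmul (a / T) (a % T)
    rw [Nat.mod_add_div'] at ha
    have hb := hmul (b / T) (b % T)
    rw [Nat.mod_add_div'] at hb
    rw [ha, hb, hab]
  -- decompose the occurrence of x
  have hx' : seg (fun t => (ω t, ν t)) i₀ x.length = x := hx
  have hfst : x.map Prod.fst = seg ω i₀ x.length := by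
    conv_lhs => rw [← hx']
    simp [seg, List.map_map, Function.comp]
  have hsnd : x.map Prod.snd = seg ν i₀ x.length := by
    conv_lhs => rw [← hx']
    simp [seg, List.map_map, Function.comp]
  have hX : OccursAt ω (x.map Prod.fst) i₀ := by
    rw [OccursAt, List.length_map]
    exact hfst.symm
  obtain ⟨L, hL⟩ := key ω hω T hT (x.map Prod.fst) i₀ hX
  refine ⟨L, fun j => ?_⟩
  obtain ⟨i, hi1, hi2, hi3, hi4⟩ := hL j
  rw [List.length_map] at hi2
  refine ⟨i, hi1, hi2, ?_⟩
  rw [OccursAt] at hi3 ⊢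
  rw [List.length_map] at hi3
  -- hi3 : seg ω i x.length = x.map Prod.fst
  have hν' : seg ν i x.length = seg ν i₀ x.length := by
    rw [seg_eq_seg_iff]
    intro k hk
    exact hper (i + k) (i₀ + k) (Nat.ModEq.add_right k hi4)
  apply List.ext_getElem (by simp [seg])
  intro k hk1 hk2
  have hk : k < x.length := by simpa [seg] using hk1
  have h1 : ω (i + k) = x[k].1 := by
    have e := List.getElem_of_eq hi3 (show k < (seg ω i x.length).length by
      rw [seg_length]; exact hk)
    simpa [seg] using e
  have h2 : ν (i + k) = x[k].2 := by
    have e' : seg ν i x.length = x.map Prod.snd := by rw [hν', ← hsnd]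
    have e := List.getElem_of_eq e' (show k < (seg ν i x.length).length by
      rw [seg_length]; exact hk)
    simpa [seg] using e
  simp only [seg, List.getElem_map, List.getElem_range]
  exact Prod.ext h1 h2
end
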